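/- Let Π be a positive CNF theory, M a model of Π, and S the steady set of M for Π (the unique minimal model of the Horn theory Π^{nd}_{M←}). Then every model of Π contained in M contains S. -/

import Mathlib

structure Clause where
  head : Finset ℕ
  body : Finset ℕ
deriving DecidableEq

abbrev Theory := Finset Clause

/-- interpretation I satisfies clause c -/
def satC (I : Finset ℕ) (c : Clause) : Prop :=
  (c.head ∩ I).Nonempty ∨ ¬ c.body ⊆ I

def isModel (T : Theory) (I : Finset ℕ) : Prop := ∀ c ∈ T, satC I c

def isMinModel (T : Theory) (I : Finset ℕ) : Prop :=
  isModel T I ∧ ∀ J ⊂ I, ¬ isModel T J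

def Positive (T : Theory) : Prop := ∀ c ∈ T, c.head.Nonempty

def Horn (T : Theory) : Prop := ∀ c ∈ T, c.head.card = 1

/-- atoms occurring in a theory -/
def atoms (T : Theory) : Finset ℕ := T.biUnion (fun c => c.head ∪ c.body)

/-- c_{X←} : project head on X -/
def projHeadC (c : Clause) (X : Finset ℕ) : Clause := ⟨c.head ∩ X, c.body⟩
/-- c_X : project head and body on X -/
def projC (c : Clause) (X : Finset ℕ) : Clause := ⟨c.head ∩ X, c.body ∩ X⟩

/-- Π_{X←} -/
def projHeadT (T : Theory) (X : Finset ℕ) : Theory :=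
  (T.image (fun c => projHeadC c X)).filter (fun c => c.head.Nonempty)

/-- Π_X -/
def projT (T : Theory) (X : Finset ℕ) : Theory :=
  (T.image (fun c => projC c X)).filter (fun c => c.head.Nonempty)

/-- Π^{nd} : single-head fragment -/
def nd (T : Theory) : Theory := T.filter (fun c => c.head.card = 1)

/-- the steady set of M for Π is the minimal model of Π^{nd}_{M←} -/
def isSteady (T : Theory) (M S : Finset ℕ) : Prop :=
  isMinModel (nd (projHeadT T M)) S

def simpl (T : Theory) (M S : Finset ℕ) : Theory :=
  T.filter (fun c => c.head ∩ S = ∅ ∧ c.body ⊆ M)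

/-- simplified theory of Π w.r.t. M (with steady set S) -/
def simplT (T : Theory) (M S : Finset ℕ) : Theory := projT (simpl T M S) (M \ S)

/-- E erasable in M for T -/
def Erasable (T : Theory) (M E : Finset ℕ) : Prop :=
  E.Nonempty ∧ E ⊆ M ∧ isModel T (M \ E)

def Outbound (T : Theory) (Y Z : Finset ℕ) : Prop :=
  ∃ c ∈ T, (c.head ∩ Z).Nonempty ∧ (c.body ∩ (Y \ Z)).Nonempty ∧
    c.body ∩ Z = ∅ ∧ c.head ∩ (Y \ Z) = ∅

def Elementary (T : Theory) (Y : Finset ℕ) : Prop :=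
  Y.Nonempty ∧ Y ⊆ atoms T ∧ ∀ Z, Z ⊂ Y → Z.Nonempty → Outbound T Y Z

def HEF (T : Theory) : Prop :=
  ∀ c ∈ T, ∀ E, Elementary T E → (E ∩ c.head).card ≤ 1

def DisjunctiveSet (T : Theory) (S : Finset ℕ) : Prop :=
  ∃ c ∈ T, 1 < (c.head ∩ S).card

def SuperElementary (T : Theory) (X : Finset ℕ) : Prop :=
  Elementary T X ∧ ¬ Outbound T (atoms T) X

def posForm (T : Theory) (phi : ℕ) : Theory :=
  T.filter (fun c => c.head.Nonempty) ∪
  (T.filter (fun c => c.head = ∅)).image (fun c => ⟨{phi}, c.body⟩) ∪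
  (atoms T).image (fun a => ⟨{a}, {phi}⟩)

/-
Intersecting any model of Π inside M with the steady set S gives a model of the Horn theory
Π^{nd}_{M←}, because models of a Horn theory are closed under intersection. Minimality of S then
forces S to be contained in that model.
-/

lemma satC_iff_of_head_eq_singleton {c : Clause} {a : ℕ} (h : c.head = {a}) (I : Finset ℕ) :
    satC I c ↔ (c.body ⊆ I → a ∈ I) := by
  have : ({a} ∩ I).Nonempty ↔ a ∈ I := by simp [Finset.Nonempty]
  rw [satC, h, this]
  tauto

lemma isModel_inter_of_horn {T : Theory} (hT : Horn T) {I J : Finset ℕ}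
    (hI : isModel T I) (hJ : isModel T J) : isModel T (I ∩ J) := by
  intro c hc
  obtain ⟨a, ha⟩ := Finset.card_eq_one.mp (hT c hc)
  have hcI := (satC_iff_of_head_eq_singleton ha I).mp (hI c hc)
  have hcJ := (satC_iff_of_head_eq_singleton ha J).mp (hJ c hc)
  rw [satC_iff_of_head_eq_singleton ha, Finset.subset_inter_iff, Finset.mem_inter]
  exact fun ⟨hbI, hbJ⟩ => ⟨hcI hbI, hcJ hbJ⟩

lemma isMinModel.subset_of_horn {T : Theory} (hT : Horn T) {S N : Finset ℕ}
    (hS : isMinModel T S) (hN : isModel T N) : S ⊆ N := by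
  by_contra hSN
  have hssub : S ∩ N ⊂ S := Finset.ssubset_iff_subset_ne.mpr
    ⟨Finset.inter_subset_left, fun h => hSN (h ▸ Finset.inter_subset_right)⟩
  exact hS.2 _ hssub (isModel_inter_of_horn hT hS.1 hN)

lemma horn_nd (T : Theory) : Horn (nd T) := fun _ hc => (Finset.mem_filter.mp hc).2

lemma isModel.mono {T T' : Theory} (hT : T' ⊆ T) {I : Finset ℕ} (hI : isModel T I) :
    isModel T' I := fun c hc => hI c (hT hc)

lemma satC_projHeadC {N M : Finset ℕ} (hNM : N ⊆ M) {c : Clause} (hc : satC N c) :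
    satC N (projHeadC c M) := by
  unfold satC projHeadC at *
  rwa [Finset.inter_assoc, Finset.inter_eq_right.mpr hNM]

lemma isModel_projHeadT {T : Theory} {N M : Finset ℕ} (hNM : N ⊆ M) (hN : isModel T N) :
    isModel (projHeadT T M) N := by
  intro c' hc'
  simp only [projHeadT, Finset.mem_filter, Finset.mem_image] at hc'
  obtain ⟨⟨c, hcT, rfl⟩, -⟩ := hc'
  exact satC_projHeadC hNM (hN c hcT)

theorem stmt2_general (T : Theory) (M S : Finset ℕ)
    (hS : isSteady T M S) :
    ∀ N ⊆ M, isModel T N → S ⊆ N := by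
  intro N hNM hN
  exact hS.subset_of_horn (horn_nd _)
    ((isModel_projHeadT hNM hN).mono (Finset.filter_subset _ _))

theorem stmt2 (T : Theory) (M S : Finset ℕ) (hPos : Positive T) (hM : isModel T M)
    (hS : isSteady T M S) (hSM : S ⊆ M) :
    ∀ N ⊆ M, isModel T N → S ⊆ N :=
  stmt2_general T M S hS
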